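/- Let F̆ ∈ M̆ with mean m̆ := ∫₀¹ F̆(u)du and standard deviation s̆ := ‖F̆ − m̆‖_{L²} > 0, and let ε > 0. Then the set of values ‖g − ∫₀¹g(u)du‖_{L²} attained as g ranges over M̆_ε is exactly the interval [max{s̆ − ε, 0}, s̆ + ε]; in particular the supremum s̆ + ε and the infimum max{s̆ − ε, 0} are both attained by elements of M̆_ε. -/

import Mathlib

open MeasureTheory Set

noncomputable section

/-- Lebesgue measure restricted to `[0,1]`. -/
def μ01 : Measure ℝ := volume.restrict (Icc (0:ℝ) 1)

instance : IsFiniteMeasure μ01 := by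
  constructor
  simp [μ01, Real.volume_Icc]

/-- The set `M̆` of elements of `L²([0,1])` admitting a nondecreasing representative. -/
def Mqf : Set (Lp ℝ 2 μ01) :=
  {g | ∃ g₀ : ℝ → ℝ, MonotoneOn g₀ (Icc (0:ℝ) 1) ∧ (g : ℝ → ℝ) =ᵐ[μ01] g₀}

/-- The `ε`-Wasserstein ball of quantile functions around `F`. -/
def Mball (F : Lp ℝ 2 μ01) (ε : ℝ) : Set (Lp ℝ 2 μ01) :=
  {g ∈ Mqf | ‖g - F‖ ≤ ε}

/-! Centering `g ↦ g - ∫ g` is an orthogonal projection, hence 1-Lipschitz, so on the ball the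
standard deviation stays within `ε` of `s̆`. Conversely, dilating `F̆` about its mean by a factor
`t ≥ 0` keeps it nondecreasing, multiplies its standard deviation by `t` and moves it by
`|t - 1| s̆`; `t = v / s̆` realises every value `v` of the interval. -/

instance : IsProbabilityMeasure μ01 := by
  constructor
  simp [μ01, Real.volume_Icc]

section Centering

variable {α : Type*} [MeasurableSpace α] {μ : Measure α}

theorem MeasureTheory.Lp.const_smul {𝕜 E : Type*} [NormedField 𝕜] [NormedAddCommGroup E]
    [NormedSpace 𝕜 E] {p : ENNReal} [Fact (1 ≤ p)] [IsFiniteMeasure μ] (t : 𝕜) (c : E) :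
    Lp.const p μ (t • c) = t • Lp.const p μ c :=
  rfl

variable [IsProbabilityMeasure μ]

theorem MeasureTheory.Lp.norm_const_one : ‖Lp.const 2 μ (1 : ℝ)‖ = 1 := by
  simp [Lp.norm_const]

theorem integral_eq_inner_const_one (f : Lp ℝ 2 μ) :
    ∫ u, f u ∂μ = inner ℝ (Lp.const 2 μ (1 : ℝ)) f := by
  rw [← indicatorConstLp_univ, L2.inner_indicatorConstLp_one]
  simp

variable (μ) in
/-- Subtracting the mean (`centering_apply`), seen as the orthogonal projection onto the
complement of the constants. -/
def centering : Lp ℝ 2 μ →L[ℝ] Lp ℝ 2 μ :=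
  (ℝ ∙ Lp.const 2 μ (1 : ℝ))ᗮ.starProjection

theorem centering_apply (f : Lp ℝ 2 μ) :
    centering μ f = f - Lp.const 2 μ (∫ u, f u ∂μ) := by
  rw [centering, Submodule.starProjection_orthogonal_val,
    Submodule.starProjection_unit_singleton ℝ Lp.norm_const_one, integral_eq_inner_const_one,
    ← Lp.const_smul, smul_eq_mul, mul_one]

theorem centering_const (c : ℝ) : centering μ (Lp.const 2 μ c) = 0 := by
  refine Submodule.starProjection_orthogonal_apply_eq_zero (Submodule.mem_span_singleton.2 ⟨c, ?_⟩)
  rw [← Lp.const_smul, smul_eq_mul, mul_one]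

theorem centering_centering (f : Lp ℝ 2 μ) : centering μ (centering μ f) = centering μ f :=
  congr($(Submodule.isIdempotentElem_starProjection _) f)

theorem norm_centering_le (f : Lp ℝ 2 μ) : ‖centering μ f‖ ≤ ‖f‖ :=
  Submodule.norm_starProjection_apply_le _ f

theorem abs_norm_centering_sub_le (f g : Lp ℝ 2 μ) :
    |‖centering μ g‖ - ‖centering μ f‖| ≤ ‖g - f‖ :=
  calc |‖centering μ g‖ - ‖centering μ f‖| ≤ ‖centering μ g - centering μ f‖ :=
        abs_norm_sub_norm_le _ _
    _ = ‖centering μ (g - f)‖ := by rw [map_sub]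
    _ ≤ ‖g - f‖ := norm_centering_le _

def dilateAboutMean (t : ℝ) (f : Lp ℝ 2 μ) : Lp ℝ 2 μ :=
  Lp.const 2 μ (∫ u, f u ∂μ) + t • centering μ f

theorem centering_dilateAboutMean (t : ℝ) (f : Lp ℝ 2 μ) :
    centering μ (dilateAboutMean t f) = t • centering μ f := by
  rw [dilateAboutMean, map_add, map_smul, centering_const, centering_centering, zero_add]

theorem dilateAboutMean_sub_self (t : ℝ) (f : Lp ℝ 2 μ) :
    dilateAboutMean t f - f = (t - 1) • centering μ f := by
  rw [dilateAboutMean, sub_smul, one_smul, centering_apply]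
  abel

theorem coeFn_dilateAboutMean (t : ℝ) (f : Lp ℝ 2 μ) :
    dilateAboutMean t f =ᵐ[μ] fun x => (∫ u, f u ∂μ) + t * (f x - ∫ u, f u ∂μ) := by
  rw [dilateAboutMean, centering_apply]
  set m := ∫ u, f u ∂μ
  filter_upwards [Lp.coeFn_add (Lp.const 2 μ m) (t • (f - Lp.const 2 μ m)),
    Lp.coeFn_smul t (f - Lp.const 2 μ m), Lp.coeFn_sub f (Lp.const 2 μ m),
    Lp.coeFn_const 2 μ m] with x h_add h_smul h_sub h_const
  simp only [h_add, h_smul, h_sub, h_const, Pi.add_apply, Pi.smul_apply, Pi.sub_apply,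
    Function.const_apply, smul_eq_mul]

theorem norm_centering_mem_Icc {F g : Lp ℝ 2 μ} {ε : ℝ} (hg : ‖g - F‖ ≤ ε) :
    ‖centering μ g‖ ∈ Icc (max (‖centering μ F‖ - ε) 0) (‖centering μ F‖ + ε) := by
  have h := abs_le.1 ((abs_norm_centering_sub_le F g).trans hg)
  exact ⟨max_le (by linarith) (norm_nonneg _), by linarith⟩

theorem exists_dilateAboutMean_norm_centering_eq {F : Lp ℝ 2 μ} (hF : 0 < ‖centering μ F‖)
    {ε v : ℝ} (hv : v ∈ Icc (max (‖centering μ F‖ - ε) 0) (‖centering μ F‖ + ε)) :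
    ∃ t, 0 ≤ t ∧ ‖dilateAboutMean t F - F‖ ≤ ε ∧ ‖centering μ (dilateAboutMean t F)‖ = v := by
  set s := ‖centering μ F‖
  obtain ⟨hv_lo, hv_hi⟩ := hv
  rw [max_le_iff] at hv_lo
  have hts : v / s * s = v := div_mul_cancel₀ v hF.ne'
  refine ⟨v / s, div_nonneg hv_lo.2 hF.le, ?_, ?_⟩
  · calc ‖dilateAboutMean (v / s) F - F‖ = |(v / s - 1) * s| := by
          rw [dilateAboutMean_sub_self, norm_smul, Real.norm_eq_abs, abs_mul, abs_of_pos hF]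
      _ ≤ ε := by
          rw [sub_mul, one_mul, hts, abs_le]
          constructor <;> linarith
  · rw [centering_dilateAboutMean, norm_smul, Real.norm_of_nonneg (div_nonneg hv_lo.2 hF.le), hts]

theorem image_norm_centering_ball_of_dilateAboutMean_mem {S : Set (Lp ℝ 2 μ)}
    (hS : ∀ f ∈ S, ∀ t : ℝ, 0 ≤ t → dilateAboutMean t f ∈ S) {F : Lp ℝ 2 μ} (hFS : F ∈ S)
    (hF : 0 < ‖centering μ F‖) (ε : ℝ) :
    (fun g => ‖centering μ g‖) '' {g ∈ S | ‖g - F‖ ≤ ε}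
      = Icc (max (‖centering μ F‖ - ε) 0) (‖centering μ F‖ + ε) := by
  ext v
  constructor
  · rintro ⟨g, ⟨-, hg⟩, rfl⟩
    exact norm_centering_mem_Icc hg
  · intro hv
    obtain ⟨t, ht, hdist, hnorm⟩ := exists_dilateAboutMean_norm_centering_eq hF hv
    exact ⟨dilateAboutMean t F, ⟨hS F hFS t ht, hdist⟩, hnorm⟩

end Centering

theorem dilateAboutMean_mem_Mqf {f : Lp ℝ 2 μ01} (hf : f ∈ Mqf) {t : ℝ} (ht : 0 ≤ t) :
    dilateAboutMean t f ∈ Mqf := by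
  obtain ⟨f₀, hmono, hae⟩ := hf
  set m := ∫ u, f u ∂μ01
  refine ⟨fun x => m + t * (f₀ x - m), fun x hx y hy hxy => ?_, ?_⟩
  · dsimp only
    gcongr
    exact hmono hx hy hxy
  · filter_upwards [coeFn_dilateAboutMean t f, hae] with x hx hx₀
    rw [hx, hx₀]

theorem stmt3 (F : Lp ℝ 2 μ01) (hF : F ∈ Mqf) (ε : ℝ) (hε : 0 < ε)
    (mF s : ℝ) (hmF : mF = ∫ u, F u ∂μ01)
    (hs : s = ‖F - Lp.const 2 μ01 mF‖) (hs0 : 0 < s) :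
    (fun g : Lp ℝ 2 μ01 => ‖g - Lp.const 2 μ01 (∫ u, g u ∂μ01)‖) '' Mball F ε
      = Icc (max (s - ε) 0) (s + ε) ∧
    (s + ε) ∈ (fun g : Lp ℝ 2 μ01 => ‖g - Lp.const 2 μ01 (∫ u, g u ∂μ01)‖) '' Mball F ε ∧
    max (s - ε) 0 ∈ (fun g : Lp ℝ 2 μ01 => ‖g - Lp.const 2 μ01 (∫ u, g u ∂μ01)‖) '' Mball F ε := by
  subst hmF hs
  simp only [← centering_apply] at hs0 ⊢
  have key := image_norm_centering_ball_of_dilateAboutMean_mem (fun f hf t ht => dilateAboutMean_mem_Mqf hf ht)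
    hF hs0 ε
  refine ⟨key, ?_, ?_⟩ <;> rw [Mball, key]
  · exact ⟨max_le (by linarith) (by linarith), le_rfl⟩
  · exact ⟨le_rfl, max_le (by linarith) (by linarith)⟩
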